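/- arXiv:1707.08762 — 2 statements merged into one kernel-verified Lean document; each statement's English description precedes it below -/
import Mathlib

section
/- Grounded belief is consistent: in a topological argumentation model, the agent never believes the empty proposition, i.e., ∅ ∉ LFP_τ and hence ¬B ∅. Equivalently, B P implies ¬B (X \ P). -/
/-!
Any two members of the grounded extension intersect: the extension is conflict-free, and two
disjoint opens always attack one another. Hence `∅`, which attacks itself, is not in the extension,
and a support of `P` and a support of `Pᶜ`, being disjoint, cannot both lie in it.
-/

variable {X : Type*} [TopologicalSpace X]

/-- The set of opens defended by the family `T` of opens
(`atk t t'` reads "t' attacks t"). -/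
def defends (atk : Set X → Set X → Prop) (T : Set (Set X)) : Set (Set X) :=
  {t | IsOpen t ∧ ∀ t', IsOpen t' → atk t t' → ∃ t'' ∈ T, atk t' t''}

/-- The grounded extension `LFP_τ`: the least fixed point of the defense
function, constructed as the intersection of all prefixed points. -/
def groundedExt (atk : Set X → Set X → Prop) : Set (Set X) :=
  ⋂₀ {T : Set (Set X) | defends atk T ⊆ T}

/-- Grounded belief: some member of the grounded extension supports `P`. -/
def GroundedBelief (atk : Set X → Set X → Prop) (P : Set X) : Prop :=
  ∃ f ∈ groundedExt atk, f ⊆ P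

section

variable (atk : Set X → Set X → Prop)

theorem defends_mono : Monotone (defends atk) := by
  rintro T T' hTT' t ⟨ht, hdef⟩
  refine ⟨ht, fun t' ht' hatk => ?_⟩
  obtain ⟨t'', ht'', hatk'⟩ := hdef t' ht' hatk
  exact ⟨t'', hTT' ht'', hatk'⟩

theorem groundedExt_subset {T : Set (Set X)} (hT : defends atk T ⊆ T) : groundedExt atk ⊆ T :=
  fun _ ht => ht T hT

theorem defends_groundedExt_subset : defends atk (groundedExt atk) ⊆ groundedExt atk :=
  fun _ ht _ hT => hT (defends_mono atk (groundedExt_subset atk hT) ht)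

theorem groundedExt_subset_defends : groundedExt atk ⊆ defends atk (groundedExt atk) :=
  groundedExt_subset atk (defends_mono atk (defends_groundedExt_subset atk))

theorem isOpen_of_mem_groundedExt {t : Set X} (ht : t ∈ groundedExt atk) : IsOpen t :=
  (groundedExt_subset_defends atk ht).1

/- The members of the grounded extension that attack none of its members form a prefixed point
of `defends`: an attack of `t` on `s` is countered by some `u` defending `s`, and `u` in turn by
a member of that family defending `t`. -/
theorem groundedExt_not_attack {s t : Set X} (hs : s ∈ groundedExt atk)
    (ht : t ∈ groundedExt atk) : ¬ atk s t := by
  let C := {t ∈ groundedExt atk | ∀ s ∈ groundedExt atk, ¬ atk s t}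
  have hC : defends atk C ⊆ C := by
    intro t ht
    refine ⟨defends_groundedExt_subset atk (defends_mono atk (fun _ h => h.1) ht), ?_⟩
    intro s hs hatk
    obtain ⟨u, hu, hatk_u⟩ := (groundedExt_subset_defends atk hs).2 t ht.1 hatk
    obtain ⟨v, hv, hatk_v⟩ := ht.2 u (isOpen_of_mem_groundedExt atk hu) hatk_u
    exact hv.2 u hu hatk_v
  exact (groundedExt_subset atk hC ht).2 s hs

theorem inter_nonempty_of_mem_groundedExt
    (hdisj : ∀ t₁ t₂ : Set X, IsOpen t₁ → IsOpen t₂ → t₁ ∩ t₂ = ∅ → atk t₁ t₂ ∨ atk t₂ t₁)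
    {s t : Set X} (hs : s ∈ groundedExt atk) (ht : t ∈ groundedExt atk) : (s ∩ t).Nonempty := by
  rw [Set.nonempty_iff_ne_empty]
  intro hst
  rcases hdisj s t (isOpen_of_mem_groundedExt atk hs) (isOpen_of_mem_groundedExt atk ht) hst
    with hatk | hatk
  · exact groundedExt_not_attack atk hs ht hatk
  · exact groundedExt_not_attack atk ht hs hatk

end

theorem groundedBelief_consistent_general (atk : Set X → Set X → Prop)
    (h1 : ∀ t₁ t₂ : Set X, IsOpen t₁ → IsOpen t₂ → (t₁ ∩ t₂ = ∅ ↔ atk t₁ t₂ ∨ atk t₂ t₁)) :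
    ∅ ∉ groundedExt atk ∧ ¬ GroundedBelief atk ∅ ∧
    (∀ P : Set X, GroundedBelief atk P → ¬ GroundedBelief atk Pᶜ) := by
  have hinter {s t : Set X} (hs : s ∈ groundedExt atk) (ht : t ∈ groundedExt atk) :
      (s ∩ t).Nonempty :=
    inter_nonempty_of_mem_groundedExt atk (fun t₁ t₂ h₁ h₂ => (h1 t₁ t₂ h₁ h₂).1) hs ht
  have hnot_empty : ¬ GroundedBelief atk ∅ := by
    rintro ⟨f, hf, hf_empty⟩
    obtain ⟨x, hx, -⟩ := hinter hf hf
    exact hf_empty hx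
  refine ⟨fun h => hnot_empty ⟨∅, h, subset_rfl⟩, hnot_empty, ?_⟩
  rintro P ⟨f, hf, hfP⟩ ⟨g, hg, hgP⟩
  obtain ⟨x, hxf, hxg⟩ := hinter hf hg
  exact hgP hxg (hfP hxf)

/-- Grounded belief is consistent: the empty proposition is never believed,
and believing P precludes believing its complement. -/
theorem groundedBelief_consistent (atk : Set X → Set X → Prop)
    (h1 : ∀ t₁ t₂ : Set X, IsOpen t₁ → IsOpen t₂ → (t₁ ∩ t₂ = ∅ ↔ atk t₁ t₂ ∨ atk t₂ t₁))
    (h2 : ∀ t t₁ t₁' : Set X, IsOpen t → IsOpen t₁ → IsOpen t₁' → atk t₁ t → t₁' ⊆ t₁ → atk t₁' t)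
    (h3 : ∀ t : Set X, IsOpen t → t ≠ ∅ → atk ∅ t ∧ ¬ atk t ∅) :
    ∅ ∉ groundedExt atk ∧ ¬ GroundedBelief atk ∅ ∧
    (∀ P : Set X, GroundedBelief atk P → ¬ GroundedBelief atk Pᶜ) :=
  groundedBelief_consistent_general atk h1
end

section
/- In any topological argumentation model, every open set consistent with all finite combined evidence is defended by the empty set, i.e., J := {t ∈ τ ∣ ∀e ∈ E, e ∩ t ≠ ∅} satisfies J ⊆ d(∅); consequently J ⊆ LFP_τ, and evidence-based belief implies grounded belief. -/
/-! An attacker `t'` of an open `t` that meets all combined evidence is disjoint from `t`. It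
cannot be `∅`, since `t` meets `univ` and so is non-empty; and a non-empty `t'` contains a basic
open of the topology generated by `E₀`, i.e. a piece of combined evidence, which meets `t`.
So nothing attacks `t`, and `t` is defended by `∅`, hence by every family. -/

variable {X : Type*} [TopologicalSpace X]

/-- The combined evidence given by finite bodies of evidence: non-empty
intersections of finite subfamilies of the basic evidence `E₀`. -/
def combinedEvidence (E₀ : Set (Set X)) : Set (Set X) :=
  {e | e ≠ ∅ ∧ ∃ F : Set (Set X), F.Finite ∧ F ⊆ E₀ ∧ e = ⋂₀ F}

theorem univ_mem_combinedEvidence {Y : Type*} [Nonempty Y] {E₀ : Set (Set Y)}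
    (hYE₀ : Set.univ ∈ E₀) : Set.univ ∈ combinedEvidence E₀ :=
  ⟨Set.univ_nonempty.ne_empty, {Set.univ}, Set.finite_singleton _,
    Set.singleton_subset_iff.mpr hYE₀, Set.sInter_singleton _ |>.symm⟩

theorem exists_combinedEvidence_subset {E₀ : Set (Set X)}
    (hgen : ‹TopologicalSpace X› = TopologicalSpace.generateFrom E₀) {t : Set X}
    (ht : IsOpen t) (hne : t.Nonempty) : ∃ e ∈ combinedEvidence E₀, e ⊆ t := by
  obtain ⟨x, hx⟩ := hne
  obtain ⟨_, ⟨F, ⟨hF, hFE₀⟩, rfl⟩, hxF, hFt⟩ :=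
    (TopologicalSpace.isTopologicalBasis_of_subbasis hgen).exists_subset_of_mem_open hx ht
  exact ⟨⋂₀ F, ⟨Set.nonempty_iff_ne_empty.mp ⟨x, hxF⟩, F, hF, hFE₀, rfl⟩, hFt⟩

theorem defends_mono_s11 (atk : Set X → Set X → Prop) {T T' : Set (Set X)} (h : T ⊆ T') :
    defends atk T ⊆ defends atk T' := fun _ ⟨ht, hdef⟩ =>
  ⟨ht, fun t' ht' hatk => (hdef t' ht' hatk).imp fun _ ⟨hT, ha⟩ => ⟨h hT, ha⟩⟩

theorem defends_empty_subset_groundedExt (atk : Set X → Set X → Prop) :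
    defends atk ∅ ⊆ groundedExt atk := fun _ ht _ hT =>
  hT (defends_mono_s11 atk (Set.empty_subset _) ht)

theorem mem_defends_empty_of_meets_combinedEvidence {E₀ : Set (Set X)}
    [Nonempty X] {atk : Set X → Set X → Prop} (hXE₀ : Set.univ ∈ E₀)
    (hgen : ‹TopologicalSpace X› = TopologicalSpace.generateFrom E₀)
    (hdisj : ∀ t₁ t₂ : Set X, IsOpen t₁ → IsOpen t₂ → atk t₁ t₂ → t₁ ∩ t₂ = ∅)
    (hempty : ∀ t : Set X, IsOpen t → t ≠ ∅ → ¬ atk t ∅) {t : Set X} (ht : IsOpen t)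
    (hmeet : ∀ e ∈ combinedEvidence E₀, e ∩ t ≠ ∅) : t ∈ defends atk ∅ := by
  have htne : t ≠ ∅ := fun h => hmeet _ (univ_mem_combinedEvidence hXE₀) (by simp [h])
  refine ⟨ht, fun t' ht' hatk => absurd hatk ?_⟩
  rcases Set.eq_empty_or_nonempty t' with rfl | ht'ne
  · exact hempty t ht htne
  intro hatk
  obtain ⟨e, he, het'⟩ := exists_combinedEvidence_subset hgen ht' ht'ne
  refine hmeet e he (Set.subset_empty_iff.mp ?_)
  calc e ∩ t ⊆ t' ∩ t := Set.inter_subset_inter_left t het'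
    _ = ∅ := by rw [Set.inter_comm, hdisj t t' ht ht' hatk]

theorem J_subset_defends_empty_general (E₀ : Set (Set X)) (atk : Set X → Set X → Prop)
    (hE₀ : ∅ ∉ E₀) (hXE₀ : Set.univ ∈ E₀)
    (hgen : ‹TopologicalSpace X› = TopologicalSpace.generateFrom E₀)
    (h1 : ∀ t₁ t₂ : Set X, IsOpen t₁ → IsOpen t₂ → (t₁ ∩ t₂ = ∅ ↔ atk t₁ t₂ ∨ atk t₂ t₁))
    (h3 : ∀ t : Set X, IsOpen t → t ≠ ∅ → atk ∅ t ∧ ¬ atk t ∅) :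
    {t : Set X | IsOpen t ∧ ∀ e ∈ combinedEvidence E₀, e ∩ t ≠ ∅} ⊆
      defends atk ∅ ∧
    {t : Set X | IsOpen t ∧ ∀ e ∈ combinedEvidence E₀, e ∩ t ≠ ∅} ⊆
      groundedExt atk ∧
    (∀ P : Set X,
      (∃ t : Set X, IsOpen t ∧ t ⊆ P ∧ ∀ e ∈ combinedEvidence E₀, t ∩ e ≠ ∅) →
      GroundedBelief atk P) := by
  have : Nonempty X := Set.nonempty_iff_univ_nonempty.mpr <|
    Set.nonempty_iff_ne_empty.mpr fun h => hE₀ (h ▸ hXE₀)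
  have hJ : {t : Set X | IsOpen t ∧ ∀ e ∈ combinedEvidence E₀, e ∩ t ≠ ∅} ⊆
      defends atk ∅ := fun t ⟨ht, hmeet⟩ =>
    mem_defends_empty_of_meets_combinedEvidence hXE₀ hgen
      (fun t₁ t₂ h₁ h₂ ha => (h1 t₁ t₂ h₁ h₂).mpr (Or.inl ha))
      (fun t ht hne => (h3 t ht hne).2) ht hmeet
  have hJ_grounded := hJ.trans (defends_empty_subset_groundedExt atk)
  refine ⟨hJ, hJ_grounded, fun P ⟨t, ht, htP, hmeet⟩ => ⟨t, hJ_grounded ⟨ht, ?_⟩, htP⟩⟩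
  exact fun e he => Set.inter_comm e t ▸ hmeet e he

/-- Every open consistent with all finite combined evidence is defended by
the empty set; consequently it lies in the grounded extension, and
evidence-based belief implies grounded belief. -/
theorem J_subset_defends_empty (E₀ : Set (Set X)) (atk : Set X → Set X → Prop)
    (hE₀ : ∅ ∉ E₀) (hXE₀ : Set.univ ∈ E₀)
    (hgen : ‹TopologicalSpace X› = TopologicalSpace.generateFrom E₀)
    (h1 : ∀ t₁ t₂ : Set X, IsOpen t₁ → IsOpen t₂ → (t₁ ∩ t₂ = ∅ ↔ atk t₁ t₂ ∨ atk t₂ t₁))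
    (h2 : ∀ t t₁ t₁' : Set X, IsOpen t → IsOpen t₁ → IsOpen t₁' → atk t₁ t → t₁' ⊆ t₁ → atk t₁' t)
    (h3 : ∀ t : Set X, IsOpen t → t ≠ ∅ → atk ∅ t ∧ ¬ atk t ∅) :
    {t : Set X | IsOpen t ∧ ∀ e ∈ combinedEvidence E₀, e ∩ t ≠ ∅} ⊆
      defends atk ∅ ∧
    {t : Set X | IsOpen t ∧ ∀ e ∈ combinedEvidence E₀, e ∩ t ≠ ∅} ⊆
      groundedExt atk ∧
    (∀ P : Set X,
      (∃ t : Set X, IsOpen t ∧ t ⊆ P ∧ ∀ e ∈ combinedEvidence E₀, t ∩ e ≠ ∅) →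
      GroundedBelief atk P) :=
  J_subset_defends_empty_general E₀ atk hE₀ hXE₀ hgen h1 h3
end
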